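/- The following identities hold in A: (a) for every v ∈ V and e ∈ E, z^{γ_v} * u_e = (u_e − (γ e v)•1) * z^{γ_v}; (b) for every v ∈ V, z^{−γ_v} * z^{γ_v} = ∏_{e∈E} T_{e,v}, where T_{e,v} = ∏_{k=0}^{γ e v − 1}(u_e + k•1) if γ e v > 0, T_{e,v} = ∏_{m=1}^{|γ e v|}(u_e − m•1) if γ e v < 0, and T_{e,v} = 1 if γ e v = 0; (c) for every v ∈ V, z^{γ_v} * z^{−γ_v} = ∏_{e∈E} T'_{e,v}, where T'_{e,v} = ∏_{m=1}^{γ e v}(u_e − m•1) if γ e v > 0, T'_{e,v} = ∏_{k=0}^{|γ e v| − 1}(u_e + k•1) if γ e v < 0, and T'_{e,v} = 1 if γ e v = 0; (d) for all i, j ∈ V with i ≠ j, z^{γ_i} * z^{−γ_j} = z^{−γ_j} * z^{γ_i}. (These are exactly the twisted generalized Weyl relations showing that X_v ↦ z^{γ_v}, Y_v ↦ z^{−γ_v}, u_e ↦ y_e * x_e defines the canonical representation φ_Γ of the TGW algebra A(Γ) by differential operators.) -/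

import Mathlib

/-!
The only analytic input is `[y_e, x_e] = 1`. It gives `x_e u_e = (u_e - 1) x_e` and
`y_e u_e = (u_e + 1) y_e`, so `z_e^{(p)}` shifts `u_e` by `-p`, and `y_e^n x_e^n`, `x_e^n y_e^n`
telescope into products of shifted copies of `u_e`. Factors belonging to distinct `e` commute,
so every relation reduces to a single variable. For `i ≠ j` the hypothesis on `γ` says that
`γ e i` and `-γ e j` never have strictly opposite signs, so `z_e^{(γ e i)}` and `z_e^{(-γ e j)}`
are powers of the same generator.
-/

set_option linter.unusedSectionVars false

open MvPolynomial

variable {K : Type*} [Field K] {E : Type*} [Fintype E] [DecidableEq E]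

noncomputable def Wx (K : Type*) [Field K] {E : Type*} (e : E) :
    Module.End K (MvPolynomial E K) :=
  LinearMap.mulLeft K (X e)

noncomputable def Wy (K : Type*) [Field K] {E : Type*} (e : E) :
    Module.End K (MvPolynomial E K) :=
  (pderiv e).toLinearMap

noncomputable def Wu (K : Type*) [Field K] {E : Type*} (e : E) :
    Module.End K (MvPolynomial E K) :=
  Wy K e * Wx K e

lemma pderiv_pderiv_comm (a b : E) (p : MvPolynomial E K) :
    pderiv a (pderiv b p) = pderiv b (pderiv a p) := by
  induction p using MvPolynomial.induction_on with
  | C c => simp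
  | add p q hp hq => simp [hp, hq]
  | mul_X p i hp =>
      by_cases hai : a = i
      · subst hai
        by_cases hbi : b = a
        · subst hbi; rfl
        · simp [pderiv_mul, pderiv_X_of_ne (Ne.symm hbi), hp]; ring
      · by_cases hbi : b = i
        · subst hbi
          simp [pderiv_mul, pderiv_X_of_ne (Ne.symm hai), hp]; ring
        · simp [pderiv_mul, pderiv_X_of_ne (Ne.symm hai), pderiv_X_of_ne (Ne.symm hbi), hp]

lemma commute_Wx_Wx (a b : E) : Commute (Wx K a) (Wx K b) := by
  show _ = _
  apply LinearMap.ext; intro p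
  simp [Wx, Module.End.mul_apply, mul_left_comm]

lemma commute_Wy_Wy (a b : E) : Commute (Wy K a) (Wy K b) := by
  show _ = _
  apply LinearMap.ext; intro p
  simpa [Wy, Module.End.mul_apply] using pderiv_pderiv_comm (K := K) a b p

lemma commute_Wy_Wx {a b : E} (h : a ≠ b) : Commute (Wy K a) (Wx K b) := by
  show _ = _
  apply LinearMap.ext; intro p
  simp [Wy, Wx, Module.End.mul_apply, pderiv_mul, pderiv_X_of_ne (Ne.symm h)]

/-- `z_e^{(p)}` -/
noncomputable def Wz (K : Type*) [Field K] {E : Type*} (e : E) (p : ℤ) :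
    Module.End K (MvPolynomial E K) :=
  if 0 ≤ p then Wx K e ^ p.toNat else Wy K e ^ (-p).toNat

lemma commute_Wz {a b : E} (h : a ≠ b) (p q : ℤ) :
    Commute (Wz K a p) (Wz K b q) := by
  unfold Wz
  split_ifs <;>
    exact Commute.pow_pow (by
      first
        | exact commute_Wx_Wx a b
        | exact commute_Wy_Wy a b
        | exact commute_Wy_Wx h
        | exact (commute_Wy_Wx h.symm).symm) _ _

/-- `z^k` for `k : E → ℤ` -/
noncomputable def Zpow (K : Type*) [Field K] {E : Type*} [Fintype E] [DecidableEq E]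
    (k : E → ℤ) : Module.End K (MvPolynomial E K) :=
  Finset.univ.noncommProd (fun e => Wz K e (k e))
    (fun a _ b _ hab => commute_Wz hab _ _)

lemma commute_aeval_aeval {A : Type*} [Ring A] [Algebra K A] {a b : A} (h : Commute a b)
    (p q : Polynomial K) : Commute (Polynomial.aeval a p) (Polynomial.aeval b q) := by
  rw [Polynomial.aeval_eq_sum_range, Polynomial.aeval_eq_sum_range]
  apply Commute.sum_left
  intro i _
  apply Commute.sum_right
  intro j _
  exact ((h.pow_pow i j).smul_left _).smul_right _

lemma commute_Wu (a b : E) : Commute (Wu K a) (Wu K b) := by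
  rcases eq_or_ne a b with rfl | h
  · rfl
  · exact Commute.mul_left
      ((commute_Wy_Wy a b).mul_right (commute_Wy_Wx h))
      (((commute_Wy_Wx h.symm).symm).mul_right (commute_Wx_Wx a b))

/-- The defining property of the incidence matrix of a multiquiver: every row has
at most one positive and at most one negative entry. -/
def CondM {V E : Type*} (γ : E → V → ℤ) : Prop :=
  ∀ e : E, (∀ v w : V, 0 < γ e v → 0 < γ e w → v = w) ∧
    (∀ v w : V, γ e v < 0 → γ e w < 0 → v = w)

/-- The polynomial giving `T_{e,v}`:
`∏_{k=0}^{c−1}(X + k)` if `c > 0`, `∏_{m=1}^{|c|}(X − m)` if `c < 0`, `1` if `c = 0`. -/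
noncomputable def Tpoly (K : Type*) [Field K] (c : ℤ) : Polynomial K :=
  if 0 < c then ∏ k ∈ Finset.range c.toNat, (Polynomial.X + Polynomial.C (k : K))
  else ∏ m ∈ Finset.range (-c).toNat, (Polynomial.X - Polynomial.C ((m : K) + 1))

/-- The polynomial giving `T'_{e,v}`:
`∏_{m=1}^{c}(X − m)` if `c > 0`, `∏_{k=0}^{|c|−1}(X + k)` if `c < 0`, `1` if `c = 0`. -/
noncomputable def Tpoly' (K : Type*) [Field K] (c : ℤ) : Polynomial K :=
  if 0 < c then ∏ m ∈ Finset.range c.toNat, (Polynomial.X - Polynomial.C ((m : K) + 1))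
  else ∏ k ∈ Finset.range (-c).toNat, (Polynomial.X + Polynomial.C (k : K))

section ShiftRelations

variable {A : Type*} [Ring A] {a b u : A}

theorem pow_mul_eq_add_intCast_mul {c : ℤ} (h : a * u = (u + c) * a) (n : ℕ) :
    a ^ n * u = (u + (n * c : ℤ)) * a ^ n := by
  induction n with
  | zero => simp
  | succ n ih =>
    calc a ^ (n + 1) * u = (a ^ n * u + a ^ n * c) * a := by
          rw [pow_succ, mul_assoc, h, ← mul_assoc, mul_add]
      _ = (u + ((n + 1 : ℕ) * c : ℤ)) * a ^ (n + 1) := by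
          rw [ih, ← (Int.cast_commute c _).eq, pow_succ]
          push_cast
          noncomm_ring

theorem pow_mul_pow_eq_aeval_prod {R : Type*} [CommRing R] [Algebra R A] {c d : ℤ}
    (hba : b * a = u + d) (hbu : b * u = (u + c) * b) (n : ℕ) :
    b ^ n * a ^ n = Polynomial.aeval u
      (∏ k ∈ Finset.range n, (Polynomial.X + Polynomial.C ((d + k * c : ℤ) : R))) := by
  induction n with
  | zero => simp
  | succ n ih =>
    calc b ^ (n + 1) * a ^ (n + 1) = (b ^ n * u + b ^ n * d) * a ^ n := by
          rw [pow_succ, pow_succ', mul_assoc, ← mul_assoc b, hba, ← mul_assoc, mul_add]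
      _ = (u + ((d + n * c : ℤ) : A)) * (b ^ n * a ^ n) := by
          rw [pow_mul_eq_add_intCast_mul hbu, ← (Int.cast_commute d _).eq]
          push_cast
          noncomm_ring
      _ = _ := by
          rw [ih, Finset.prod_range_succ_comm, map_mul]
          simp

end ShiftRelations

section Weyl

variable {F : Type*} [Field F] {ι : Type*}

theorem Wx_mul_Wy (e : ι) : Wx F e * Wy F e = Wu F e - 1 := by
  refine LinearMap.ext fun p => ?_
  simp [Wx, Wy, Wu, Module.End.mul_apply]

theorem Wx_mul_Wu (e : ι) : Wx F e * Wu F e = (Wu F e - 1) * Wx F e := by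
  rw [Wu, ← mul_assoc, Wx_mul_Wy, Wu]

theorem Wy_mul_Wu (e : ι) : Wy F e * Wu F e = (Wu F e + 1) * Wy F e := by
  calc Wy F e * Wu F e = Wy F e * (Wx F e * Wy F e + 1) := by rw [Wx_mul_Wy, sub_add_cancel]
    _ = (Wu F e + 1) * Wy F e := by rw [Wu]; noncomm_ring

theorem Wy_pow_mul_Wx_pow (e : ι) (n : ℕ) :
    Wy F e ^ n * Wx F e ^ n =
      Polynomial.aeval (Wu F e) (∏ k ∈ Finset.range n, (Polynomial.X + Polynomial.C (k : F))) := by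
  rw [pow_mul_pow_eq_aeval_prod (R := F) (u := Wu F e) (c := 1) (d := 0) (by simp [Wu])
    (by simpa using Wy_mul_Wu e)]
  simp

theorem Wx_pow_mul_Wy_pow (e : ι) (n : ℕ) :
    Wx F e ^ n * Wy F e ^ n =
      Polynomial.aeval (Wu F e)
        (∏ m ∈ Finset.range n, (Polynomial.X - Polynomial.C ((m : F) + 1))) := by
  rw [pow_mul_pow_eq_aeval_prod (R := F) (c := -1) (d := -1)
    (by simpa [sub_eq_add_neg] using Wx_mul_Wy e) (by simpa [sub_eq_add_neg] using Wx_mul_Wu e)]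
  congr 1
  refine Finset.prod_congr rfl fun k _ => ?_
  rw [sub_eq_add_neg, ← map_neg]
  congr 2
  push_cast
  ring

theorem Wz_of_nonneg (e : ι) {p : ℤ} (hp : 0 ≤ p) : Wz F e p = Wx F e ^ p.toNat :=
  if_pos hp

theorem Wz_of_nonpos (e : ι) {p : ℤ} (hp : p ≤ 0) : Wz F e p = Wy F e ^ (-p).toNat := by
  rcases hp.lt_or_eq with hp | rfl
  · exact if_neg hp.not_ge
  · simp [Wz]

theorem Wz_mul_Wu (e : ι) (p : ℤ) : Wz F e p * Wu F e = (Wu F e - p) * Wz F e p := by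
  rcases le_total 0 p with hp | hp
  · have hx : Wx F e * Wu F e = (Wu F e + ((-1 : ℤ) : Module.End F _)) * Wx F e := by
      simpa [sub_eq_add_neg] using Wx_mul_Wu e
    rw [Wz_of_nonneg e hp, pow_mul_eq_add_intCast_mul hx, Int.toNat_of_nonneg hp, mul_neg_one,
      Int.cast_neg, sub_eq_add_neg]
  · have hy : Wy F e * Wu F e = (Wu F e + ((1 : ℤ) : Module.End F _)) * Wy F e := by
      simpa using Wy_mul_Wu e
    rw [Wz_of_nonpos e hp, pow_mul_eq_add_intCast_mul hy, Int.toNat_of_nonneg (neg_nonneg.mpr hp),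
      mul_one, Int.cast_neg, sub_eq_add_neg]

theorem Wz_neg_mul_Wz (e : ι) (c : ℤ) :
    Wz F e (-c) * Wz F e c = Polynomial.aeval (Wu F e) (Tpoly F c) := by
  rcases lt_trichotomy c 0 with hc | rfl | hc
  · rw [Wz_of_nonneg e (by omega), Wz_of_nonpos e hc.le, Tpoly, if_neg hc.not_gt]
    exact Wx_pow_mul_Wy_pow e _
  · simp [Wz, Tpoly]
  · rw [Wz_of_nonpos e (by omega), Wz_of_nonneg e hc.le, Tpoly, if_pos hc, neg_neg]
    exact Wy_pow_mul_Wx_pow e _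

theorem Tpoly'_eq_Tpoly_neg (c : ℤ) : Tpoly' F c = Tpoly F (-c) := by
  rcases lt_trichotomy c 0 with hc | rfl | hc
  · rw [Tpoly', if_neg (by omega), Tpoly, if_pos (by omega)]
  · simp [Tpoly', Tpoly]
  · rw [Tpoly', if_pos hc, Tpoly, if_neg (by omega), neg_neg]

theorem Wz_mul_Wz_neg (e : ι) (c : ℤ) :
    Wz F e c * Wz F e (-c) = Polynomial.aeval (Wu F e) (Tpoly' F c) := by
  simpa [Tpoly'_eq_Tpoly_neg] using Wz_neg_mul_Wz (F := F) e (-c)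

theorem commute_Wz_Wz_of_mul_nonneg (e : ι) {p q : ℤ} (h : 0 ≤ p * q) :
    Commute (Wz F e p) (Wz F e q) := by
  rcases mul_nonneg_iff.mp h with ⟨hp, hq⟩ | ⟨hp, hq⟩
  · rw [Wz_of_nonneg e hp, Wz_of_nonneg e hq]
    exact (Commute.refl _).pow_pow _ _
  · rw [Wz_of_nonpos e hp, Wz_of_nonpos e hq]
    exact (Commute.refl _).pow_pow _ _

end Weyl

section Zpow

variable {F : Type*} [Field F] {ι : Type*} [Fintype ι] [DecidableEq ι]

theorem commute_Wz_Wu {a e : ι} (h : a ≠ e) (p : ℤ) : Commute (Wz F a p) (Wu F e) := by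
  rw [Wu]
  rcases le_total 0 p with hp | hp
  · rw [Wz_of_nonneg a hp]
    exact ((commute_Wy_Wx (K := F) h.symm).symm.mul_right (commute_Wx_Wx a e)).pow_left _
  · rw [Wz_of_nonpos a hp]
    exact ((commute_Wy_Wy (K := F) a e).mul_right (commute_Wy_Wx h)).pow_left _

theorem Zpow_mul_Wu (k : ι → ℤ) (e : ι) :
    Zpow F k * Wu F e = (Wu F e - k e) * Zpow F k := by
  have hrest : Commute (Wu F e - k e)
      ((Finset.univ.erase e).noncommProd (fun a => Wz F a (k a))
        (fun _ _ _ _ hab => commute_Wz hab _ _)) :=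
    Finset.noncommProd_commute _ _ _ _ fun a ha =>
      ((commute_Wz_Wu (F := F) (Finset.ne_of_mem_erase ha) _).sub_right
        (Int.cast_commute _ _).symm).symm
  rw [Zpow, ← Finset.noncommProd_erase_mul _ (Finset.mem_univ e) (fun a => Wz F a (k a))
    (fun _ _ _ _ hab => commute_Wz hab _ _), mul_assoc, Wz_mul_Wu, ← mul_assoc, ← hrest.eq,
    mul_assoc]

theorem Zpow_mul_Zpow (f g : ι → ℤ) :
    Zpow F f * Zpow F g =
      Finset.univ.noncommProd (fun e => Wz F e (f e) * Wz F e (g e))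
        (fun _ _ _ _ hab =>
          ((commute_Wz hab _ _).mul_right (commute_Wz hab _ _)).mul_left
            ((commute_Wz hab _ _).mul_right (commute_Wz hab _ _))) :=
  (Finset.noncommProd_mul_distrib _ _ _ _ fun _ _ _ _ hab => commute_Wz hab _ _).symm

theorem commute_Zpow_Zpow {f g : ι → ℤ} (h : ∀ e, Commute (Wz F e (f e)) (Wz F e (g e))) :
    Commute (Zpow F f) (Zpow F g) :=
  Finset.noncommProd_commute _ _ _ _ fun b _ =>
    (Finset.noncommProd_commute _ _ _ _ fun a _ => by
      rcases eq_or_ne a b with rfl | hab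
      · exact (h a).symm
      · exact commute_Wz hab.symm _ _).symm

end Zpow

theorem CondM.mul_nonpos {V E : Type*} {γ : E → V → ℤ} (hM : CondM γ) {i j : V} (hij : i ≠ j)
    (e : E) : γ e i * γ e j ≤ 0 := by
  by_contra! h
  rcases pos_and_pos_or_neg_and_neg_of_mul_pos h with ⟨hi, hj⟩ | ⟨hi, hj⟩
  · exact hij ((hM e).1 i j hi hj)
  · exact hij ((hM e).2 i j hi hj)

theorem phiGamma_relations_general {K V E : Type*} [Field K]
    [Fintype E] [DecidableEq E]
    (γ : E → V → ℤ) (hM : CondM γ) :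
    (∀ (v : V) (e : E),
        Zpow K (fun e' => γ e' v) * Wu K e =
          (Wu K e - (γ e v) • (1 : Module.End K (MvPolynomial E K)))
            * Zpow K (fun e' => γ e' v)) ∧
      (∀ v : V,
        Zpow K (fun e => -(γ e v)) * Zpow K (fun e => γ e v) =
          Finset.univ.noncommProd (fun e => Polynomial.aeval (Wu K e) (Tpoly K (γ e v)))
            (fun a _ b _ _ => commute_aeval_aeval (commute_Wu a b) _ _)) ∧
      (∀ v : V,
        Zpow K (fun e => γ e v) * Zpow K (fun e => -(γ e v)) =
          Finset.univ.noncommProd (fun e => Polynomial.aeval (Wu K e) (Tpoly' K (γ e v)))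
            (fun a _ b _ _ => commute_aeval_aeval (commute_Wu a b) _ _)) ∧
      (∀ i j : V, i ≠ j →
        Zpow K (fun e => γ e i) * Zpow K (fun e => -(γ e j)) =
          Zpow K (fun e => -(γ e j)) * Zpow K (fun e => γ e i)) := by
  refine ⟨fun v e => ?_, fun v => ?_, fun v => ?_, fun i j hij => ?_⟩
  · rw [zsmul_one]
    exact Zpow_mul_Wu _ e
  · rw [Zpow_mul_Zpow]
    exact Finset.noncommProd_congr rfl (fun e _ => Wz_neg_mul_Wz e _) _
  · rw [Zpow_mul_Zpow]
    exact Finset.noncommProd_congr rfl (fun e _ => Wz_mul_Wz_neg e _) _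
  · refine (commute_Zpow_Zpow fun e => commute_Wz_Wz_of_mul_nonneg e ?_).eq
    linarith [hM.mul_nonpos hij e]

/-- The twisted generalized Weyl relations satisfied by `z^{γ_v}`, `z^{−γ_v}` and
`u_e = y_e x_e` in the Weyl algebra: (a) `z^{γ_v} u_e = (u_e − γ_{ev}) z^{γ_v}`;
(b) `z^{−γ_v} z^{γ_v} = ∏_e T_{e,v}`; (c) `z^{γ_v} z^{−γ_v} = ∏_e T'_{e,v}`;
(d) `z^{γ_i}` and `z^{−γ_j}` commute for `i ≠ j`.  These show that
`X_v ↦ z^{γ_v}`, `Y_v ↦ z^{−γ_v}`, `u_e ↦ y_e x_e` defines the canonical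
representation `φ_Γ` of `A(Γ)` by differential operators. -/
theorem phiGamma_relations {K V E : Type*} [Field K] [CharZero K]
    [Fintype E] [DecidableEq E] [Fintype V]
    (γ : E → V → ℤ) (hM : CondM γ) :
    (∀ (v : V) (e : E),
        Zpow K (fun e' => γ e' v) * Wu K e =
          (Wu K e - (γ e v) • (1 : Module.End K (MvPolynomial E K)))
            * Zpow K (fun e' => γ e' v)) ∧
      (∀ v : V,
        Zpow K (fun e => -(γ e v)) * Zpow K (fun e => γ e v) =
          Finset.univ.noncommProd (fun e => Polynomial.aeval (Wu K e) (Tpoly K (γ e v)))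
            (fun a _ b _ _ => commute_aeval_aeval (commute_Wu a b) _ _)) ∧
      (∀ v : V,
        Zpow K (fun e => γ e v) * Zpow K (fun e => -(γ e v)) =
          Finset.univ.noncommProd (fun e => Polynomial.aeval (Wu K e) (Tpoly' K (γ e v)))
            (fun a _ b _ _ => commute_aeval_aeval (commute_Wu a b) _ _)) ∧
      (∀ i j : V, i ≠ j →
        Zpow K (fun e => γ e i) * Zpow K (fun e => -(γ e j)) =
          Zpow K (fun e => -(γ e j)) * Zpow K (fun e => γ e i)) :=
  phiGamma_relations_general γ hM
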